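/- Let γ = (1+√5)/2 and let T ⊂ ℝ² be the golden triangle with vertices O = (0,0), B = (γ,0) and C = γ·(cos(π/5), sin(π/5)): an isoceles triangle with apex angle π/5 at O, legs of length γ, and base of length 1. Let P = (cos(π/5), sin(π/5)), the point of the segment OC at distance 1 from O. Then T is the union of the triangle T₁ with vertices B, C, P and the triangle T₂ with vertices O, B, P, these two triangles have disjoint interiors, T₁ is isoceles with |BP| = |BC| = 1 and apex angle π/5 at B (a golden triangle with legs 1), and T₂ is isoceles with |PO| = |PB| = 1 and apex angle 3π/5 at P (a golden gnomon with legs 1). -/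

import Mathlib

/-!
Put `e = (1, 0)` and `u = P`: unit vectors with `⟪e, u⟫ = cos (π / 5) = φ / 2`, and `O = 0`,
`B = φ • e`, `C = φ • u`. Every length and angle in the statement is then an inner-product
computation in `e` and `u` that reduces to `φ ^ 2 = φ + 1`. Since `P` lies on `OC`, joining `B`
to `OC = OP ∪ PC` splits `T` into `T₁` and `T₂`. The line `BP` is a level set of a linear
functional which is `≤` on `T₂` and `≥` on `T₁`; being an open map, it sends the two interiors
into the two opposite open half-lines.
-/

open Real Set EuclideanGeometry
open scoped goldenRatio RealInnerProductSpace

theorem cos_pi_div_five_eq_goldenRatio_div_two : cos (π / 5) = φ / 2 := by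
  rw [cos_pi_div_five]; ring

theorem cos_three_mul_pi_div_five : cos (3 * π / 5) = ψ / 2 := by
  rw [show 3 * π / 5 = π - 2 * (π / 5) by ring, cos_pi_sub, cos_two_mul,
    cos_pi_div_five_eq_goldenRatio_div_two]
  grind

section Segment

variable {𝕜 E : Type*} [Field 𝕜] [LinearOrder 𝕜] [IsStrictOrderedRing 𝕜]
  [AddCommGroup E] [Module 𝕜 E]

theorem segment_eq_union_of_mem {x y z : E} (hy : y ∈ segment 𝕜 x z) :
    segment 𝕜 x z = segment 𝕜 x y ∪ segment 𝕜 y z := by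
  rw [segment_eq_image_lineMap] at hy
  obtain ⟨t, ⟨ht₀, ht₁⟩, rfl⟩ := hy
  rw [segment_eq_image_lineMap, ← Icc_union_Icc_eq_Icc ht₀ ht₁, image_union,
    ← segment_eq_Icc ht₀, ← segment_eq_Icc ht₁, image_segment, image_segment,
    AffineMap.lineMap_apply_zero, AffineMap.lineMap_apply_one]

theorem convexHull_triple_eq_union_of_mem_segment {a b c p : E} (hp : p ∈ segment 𝕜 b c) :
    convexHull 𝕜 {a, b, c} = convexHull 𝕜 {a, b, p} ∪ convexHull 𝕜 {a, p, c} := by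
  simp only [← convexJoin_singleton_segment, segment_eq_union_of_mem hp, convexJoin_union_right]

theorem mem_segment_zero_smul (x : E) {c : 𝕜} (hc : 1 ≤ c) : x ∈ segment 𝕜 0 (c • x) :=
  ⟨1 - c⁻¹, c⁻¹, sub_nonneg.2 (inv_le_one_of_one_le₀ hc), by positivity, by ring, by
    rw [smul_zero, zero_add, smul_smul, inv_mul_cancel₀ (by positivity), one_smul]⟩

end Segment

theorem disjoint_interior_of_le_of_ge {X : Type*} [TopologicalSpace X] {f : X → ℝ}
    (hf : IsOpenMap f) {s t : Set X} {c : ℝ} (hs : ∀ x ∈ s, f x ≤ c) (ht : ∀ x ∈ t, c ≤ f x) :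
    Disjoint (interior s) (interior t) := by
  have hs' : f '' interior s ⊆ Iio c := by
    rw [← interior_Iic]
    exact interior_maximal (by rintro _ ⟨x, hx, rfl⟩; exact hs x (interior_subset hx))
      (hf _ isOpen_interior)
  have ht' : f '' interior t ⊆ Ioi c := by
    rw [← interior_Ici]
    exact interior_maximal (by rintro _ ⟨x, hx, rfl⟩; exact ht x (interior_subset hx))
      (hf _ isOpen_interior)
  exact disjoint_left.2 fun x hxs hxt =>
    lt_asymm (mem_Iio.1 (hs' (mem_image_of_mem f hxs))) (mem_Ioi.1 (ht' (mem_image_of_mem f hxt)))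

section InnerProductSpace

variable {V : Type*} [NormedAddCommGroup V] [InnerProductSpace ℝ V]

theorem norm_eq_one_of_inner_self_eq_one {x : V} (h : ⟪x, x⟫ = 1) : ‖x‖ = 1 := by
  rwa [real_inner_self_eq_norm_sq, pow_eq_one_iff_of_nonneg (norm_nonneg x) two_ne_zero] at h

theorem InnerProductGeometry.angle_eq_of_inner_eq_cos {x y : V} {θ : ℝ} (hx : ‖x‖ = 1)
    (hy : ‖y‖ = 1) (hθ₀ : 0 ≤ θ) (hθπ : θ ≤ π) (h : ⟪x, y⟫ = cos θ) :
    InnerProductGeometry.angle x y = θ := by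
  rw [InnerProductGeometry.angle, hx, hy, mul_one, div_one, h, arccos_cos hθ₀ hθπ]

theorem dist_zero_goldenRatio_smul {x : V} (hx : ‖x‖ = 1) : dist 0 (φ • x) = φ := by
  rw [dist_zero_left, norm_smul, hx, mul_one, norm_of_nonneg goldenRatio_pos.le]

/-- Unit vectors at angle `π / 5` (as `cos (π / 5) = φ / 2`), so that `0`, `φ • e`, `φ • u` is a
golden triangle. -/
structure IsGoldenPair (e u : V) : Prop where
  norm_left : ‖e‖ = 1
  norm_right : ‖u‖ = 1
  inner_eq : ⟪e, u⟫ = φ / 2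

namespace IsGoldenPair

variable {e u : V}

theorem inner_self_left (h : IsGoldenPair e u) : ⟪e, e⟫ = 1 := by
  rw [real_inner_self_eq_norm_sq, h.norm_left, one_pow]

theorem inner_self_right (h : IsGoldenPair e u) : ⟪u, u⟫ = 1 := by
  rw [real_inner_self_eq_norm_sq, h.norm_right, one_pow]

theorem inner_eq' (h : IsGoldenPair e u) : ⟪u, e⟫ = φ / 2 := by
  rw [real_inner_comm, h.inner_eq]

theorem norm_smul_sub (h : IsGoldenPair e u) : ‖φ • e - u‖ = 1 := by
  apply norm_eq_one_of_inner_self_eq_one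
  simp only [inner_sub_left, inner_sub_right, real_inner_smul_left, real_inner_smul_right,
    h.inner_self_left, h.inner_self_right, h.inner_eq, h.inner_eq']
  grind

theorem norm_smul_sub_smul (h : IsGoldenPair e u) : ‖φ • u - φ • e‖ = 1 := by
  apply norm_eq_one_of_inner_self_eq_one
  simp only [inner_sub_left, inner_sub_right, real_inner_smul_left, real_inner_smul_right,
    h.inner_self_left, h.inner_self_right, h.inner_eq, h.inner_eq']
  grind

theorem dist_smul_left_right (h : IsGoldenPair e u) : dist (φ • e) u = 1 := by
  rw [dist_eq_norm, h.norm_smul_sub]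

theorem dist_smul_smul (h : IsGoldenPair e u) : dist (φ • e) (φ • u) = 1 := by
  rw [dist_comm, dist_eq_norm, h.norm_smul_sub_smul]

theorem angle_smul_zero_smul (h : IsGoldenPair e u) : ∠ (φ • e) 0 (φ • u) = π / 5 := by
  rw [EuclideanGeometry.angle, vsub_eq_sub, vsub_eq_sub, sub_zero, sub_zero,
    InnerProductGeometry.angle_smul_smul goldenRatio_ne_zero]
  refine InnerProductGeometry.angle_eq_of_inner_eq_cos h.norm_left h.norm_right (by positivity)
    (by linarith [pi_pos]) ?_
  rw [h.inner_eq, cos_pi_div_five_eq_goldenRatio_div_two]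

theorem angle_right_smul_smul (h : IsGoldenPair e u) : ∠ u (φ • e) (φ • u) = π / 5 := by
  rw [EuclideanGeometry.angle, vsub_eq_sub, vsub_eq_sub]
  refine InnerProductGeometry.angle_eq_of_inner_eq_cos
    (by rw [← norm_neg, neg_sub, h.norm_smul_sub]) h.norm_smul_sub_smul (by positivity)
    (by linarith [pi_pos]) ?_
  rw [cos_pi_div_five_eq_goldenRatio_div_two]
  simp only [inner_sub_left, inner_sub_right, real_inner_smul_left, real_inner_smul_right,
    h.inner_self_left, h.inner_self_right, h.inner_eq, h.inner_eq']
  grind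

theorem angle_zero_right_smul (h : IsGoldenPair e u) : ∠ 0 u (φ • e) = 3 * π / 5 := by
  rw [EuclideanGeometry.angle, vsub_eq_sub, vsub_eq_sub, zero_sub]
  refine InnerProductGeometry.angle_eq_of_inner_eq_cos (by rw [norm_neg, h.norm_right])
    h.norm_smul_sub (by positivity) (by linarith [pi_pos]) ?_
  rw [cos_three_mul_pi_div_five]
  simp only [inner_neg_left, inner_sub_right, real_inner_smul_right,
    h.inner_self_right, h.inner_eq']
  grind

theorem disjoint_interior_convexHull (h : IsGoldenPair e u) :
    Disjoint (interior (convexHull ℝ {φ • e, φ • u, u}))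
      (interior (convexHull ℝ {0, φ • e, u})) := by
  -- `φ ^ 2 • u - e` is orthogonal to `φ • e - u`, so `f` is constant on
  -- the line through `φ • e` and `u`
  set f := innerSL ℝ (φ ^ 2 • u - e)
  have hf (x : V) : f x = ⟪φ ^ 2 • u - e, x⟫ := rfl
  have hfe : f (φ • e) = φ / 2 + 1 := by
    simp only [hf, inner_sub_left, real_inner_smul_left, real_inner_smul_right,
      h.inner_self_left, h.inner_eq']
    grind
  have hfu : f u = φ / 2 + 1 := by
    simp only [hf, inner_sub_left, real_inner_smul_left, h.inner_self_right, h.inner_eq]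
    grind
  have hfφu : f (φ • u) = φ * (φ / 2 + 1) := by rw [map_smul, hfu, smul_eq_mul]
  have hpos : 0 < φ / 2 + 1 := by linarith [goldenRatio_pos]
  refine (disjoint_interior_of_le_of_ge
    (f.isOpenMap_of_ne_zero fun h0 => hpos.ne' (by rw [← hfu, h0, zero_apply]))
    (c := φ / 2 + 1) (fun x hx => ?_) (fun x hx => ?_)).symm
  · refine convexHull_min ?_ (convex_halfSpace_le f.toLinearMap.isLinear _) hx
    simp only [insert_subset_iff, singleton_subset_iff, mem_ofPred_eq,
      ContinuousLinearMap.coe_coe, map_zero, hfe, hfu]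
    exact ⟨hpos.le, le_rfl, le_rfl⟩
  · refine convexHull_min ?_ (convex_halfSpace_ge f.toLinearMap.isLinear _) hx
    simp only [insert_subset_iff, singleton_subset_iff, mem_ofPred_eq,
      ContinuousLinearMap.coe_coe, hfe, hfu, hfφu]
    exact ⟨le_rfl, le_mul_of_one_le_left hpos.le one_lt_goldenRatio.le, le_rfl⟩

end IsGoldenPair

end InnerProductSpace

theorem isGoldenPair_pi_div_five :
    IsGoldenPair !₂[(1 : ℝ), 0] !₂[cos (π / 5), sin (π / 5)] where
  norm_left := by simp [EuclideanSpace.norm_eq, Fin.sum_univ_two]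
  norm_right := by simp [EuclideanSpace.norm_eq, Fin.sum_univ_two, -cos_pi_div_five]
  inner_eq := by
    simp [EuclideanSpace.inner_eq_star_dotProduct, cos_pi_div_five_eq_goldenRatio_div_two,
      -cos_pi_div_five]

/-- Subdivision of the golden triangle: with γ = (1+√5)/2, the golden triangle T
with vertices O = (0,0), B = (γ,0), C = γ·(cos(π/5), sin(π/5)) splits, via the
point P = (cos(π/5), sin(π/5)) of the segment OC at distance 1 from O, into the
golden triangle T₁ = BCP (isoceles, |BP| = |BC| = 1, apex angle π/5 at B) and
the golden gnomon T₂ = OBP (isoceles, |PO| = |PB| = 1, apex angle 3π/5 at P),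
with disjoint interiors. -/
theorem golden_triangle_subdivision :
    let γ : ℝ := (1 + Real.sqrt 5) / 2
    let O : EuclideanSpace ℝ (Fin 2) := !₂[0, 0]
    let B : EuclideanSpace ℝ (Fin 2) := !₂[γ, 0]
    let P : EuclideanSpace ℝ (Fin 2) := !₂[Real.cos (π / 5), Real.sin (π / 5)]
    let C : EuclideanSpace ℝ (Fin 2) := γ • P
    let T : Set (EuclideanSpace ℝ (Fin 2)) := convexHull ℝ {O, B, C}
    let T₁ : Set (EuclideanSpace ℝ (Fin 2)) := convexHull ℝ {B, C, P}
    let T₂ : Set (EuclideanSpace ℝ (Fin 2)) := convexHull ℝ {O, B, P}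
    -- T is a golden triangle with apex angle π/5 at O, legs γ and base 1
    dist O B = γ ∧ dist O C = γ ∧ dist B C = 1 ∧
    EuclideanGeometry.angle B O C = π / 5 ∧
    -- P is the point of the segment OC at distance 1 from O
    dist O P = 1 ∧ P ∈ segment ℝ O C ∧
    -- T subdivides into T₁ and T₂ with disjoint interiors
    T = T₁ ∪ T₂ ∧
    interior T₁ ∩ interior T₂ = ∅ ∧
    -- T₁ is a golden triangle with legs 1 and apex angle π/5 at B
    dist B P = 1 ∧ dist B C = 1 ∧
    EuclideanGeometry.angle P B C = π / 5 ∧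
    -- T₂ is a golden gnomon with legs 1 and apex angle 3π/5 at P
    dist P O = 1 ∧ dist P B = 1 ∧
    EuclideanGeometry.angle O P B = 3 * π / 5 := by
  intro γ O B P C T T₁ T₂
  have h : IsGoldenPair !₂[1, 0] P := isGoldenPair_pi_div_five
  have hO : O = 0 := by ext i; fin_cases i <;> rfl
  have hB : B = φ • !₂[1, 0] := by ext i; fin_cases i <;> simp [B, γ]
  have hsplit : convexHull ℝ {0, φ • !₂[1, 0], φ • P} =
      convexHull ℝ {φ • !₂[1, 0], φ • P, P} ∪ convexHull ℝ {0, φ • !₂[1, 0], P} := by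
    rw [insert_comm, convexHull_triple_eq_union_of_mem_segment
      (mem_segment_zero_smul P one_lt_goldenRatio.le), union_comm,
      pair_comm P, insert_comm _ 0]
  simp only [T, T₁, T₂, C, γ, hO, hB]
  refine ⟨dist_zero_goldenRatio_smul h.norm_left, dist_zero_goldenRatio_smul h.norm_right,
    h.dist_smul_smul, h.angle_smul_zero_smul, by rw [dist_zero_left, h.norm_right],
    mem_segment_zero_smul P one_lt_goldenRatio.le, hsplit,
    disjoint_iff_inter_eq_empty.mp h.disjoint_interior_convexHull, h.dist_smul_left_right,
    h.dist_smul_smul, h.angle_right_smul_smul, by rw [dist_zero_right, h.norm_right],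
    by rw [dist_comm, h.dist_smul_left_right],
    h.angle_zero_right_smul⟩
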